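/- For every c > 0 there exists a constant C > 0 such that for all A ≥ 1, ∫₀^∞ e^(3t/2) A^(3/2) [ (4 e^t A + 16π)^(−1/2) − (4 e^t A + 16π(1 + c e^(−t/2)))^(−1/2) ] dt ≤ C. (The integrand is nonnegative, and the bound C is independent of A.) -/

import Mathlib

/-!
Write `x = 4 eᵗ A + 16π` and `d = 16π c e^{-t/2}`. Rationalising,
`x^{-1/2} - (x + d)^{-1/2} = d / (√x √(x + d) (√x + √(x + d))) ≤ d / (2 x^{3/2})`, while
`e^{3t/2} A^{3/2} = (4 eᵗ A)^{3/2} / 8 ≤ x^{3/2} / 8`. Hence the integrand is at most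
`d / 16 = π c e^{-t/2}`, whatever `A` is, and the integral is at most `2π c`.
-/
open Real MeasureTheory

lemma rpow_neg_one_half_eq_inv_sqrt {x : ℝ} (hx : 0 ≤ x) : x ^ (-(1:ℝ)/2) = (√x)⁻¹ := by
  rw [neg_div, Real.rpow_neg hx, Real.sqrt_eq_rpow]

lemma rpow_three_halves_eq_mul_sqrt {x : ℝ} (hx : 0 ≤ x) : x ^ ((3:ℝ)/2) = x * √x := by
  rw [show (3:ℝ)/2 = 1 + 1/2 by norm_num, Real.rpow_add' hx (by norm_num), Real.rpow_one,
    Real.sqrt_eq_rpow]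

lemma inv_sqrt_sub_inv_sqrt_add_le {x d : ℝ} (hx : 0 < x) (hd : 0 ≤ d) :
    (√x)⁻¹ - (√(x + d))⁻¹ ≤ d / (2 * (x * √x)) := by
  obtain ⟨a, ha, rfl⟩ : ∃ a, 0 < a ∧ a ^ 2 = x := ⟨√x, by positivity, Real.sq_sqrt hx.le⟩
  have hb : 0 < √(a ^ 2 + d) := by positivity
  have hb2 : √(a ^ 2 + d) ^ 2 = a ^ 2 + d := Real.sq_sqrt (by positivity)
  have hab : a ≤ √(a ^ 2 + d) := Real.le_sqrt_of_sq_le (by linarith)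
  rw [Real.sqrt_sq ha.le, inv_sub_inv ha.ne' hb.ne',
    div_le_div_iff₀ (by positivity) (by positivity)]
  nlinarith [mul_le_mul_of_nonneg_left hab ha.le, mul_nonneg hd ha.le]

lemma rpow_neg_one_half_sub_rpow_neg_one_half_add_nonneg {x d : ℝ} (hx : 0 < x) (hd : 0 ≤ d) :
    0 ≤ x ^ (-(1:ℝ)/2) - (x + d) ^ (-(1:ℝ)/2) :=
  sub_nonneg.2 (Real.rpow_le_rpow_of_nonpos hx (le_add_of_nonneg_right hd) (by norm_num))

lemma rpow_three_halves_mul_rpow_neg_one_half_sub_le {x y d : ℝ} (hy : 0 ≤ y) (hyx : y ≤ x)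
    (hx : 0 < x) (hd : 0 ≤ d) :
    y ^ ((3:ℝ)/2) * (x ^ (-(1:ℝ)/2) - (x + d) ^ (-(1:ℝ)/2)) ≤ d / 2 := by
  have hdiff := rpow_neg_one_half_sub_rpow_neg_one_half_add_nonneg hx hd
  rw [rpow_three_halves_eq_mul_sqrt hy, rpow_neg_one_half_eq_inv_sqrt hx.le,
    rpow_neg_one_half_eq_inv_sqrt (by positivity)] at *
  calc y * √y * ((√x)⁻¹ - (√(x + d))⁻¹)
      ≤ x * √x * (d / (2 * (x * √x))) :=
        mul_le_mul (mul_le_mul hyx (Real.sqrt_le_sqrt hyx) (by positivity) hx.le)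
          (inv_sqrt_sub_inv_sqrt_add_le hx hd) hdiff (by positivity)
    _ = d / 2 := by field_simp

noncomputable def volumeDeficitIntegrand (c A t : ℝ) : ℝ :=
  Real.exp (3 * t / 2) * A ^ ((3:ℝ)/2) *
    ((4 * Real.exp t * A + 16 * π) ^ (-(1:ℝ)/2)
      - (4 * Real.exp t * A + 16 * π * (1 + c * Real.exp (-t / 2))) ^ (-(1:ℝ)/2))

lemma volumeDeficitIntegrand_nonneg {c A : ℝ} (hc : 0 ≤ c) (hA : 0 ≤ A) (t : ℝ) :
    0 ≤ volumeDeficitIntegrand c A t := by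
  unfold volumeDeficitIntegrand
  rw [mul_one_add, ← add_assoc]
  exact mul_nonneg (by positivity)
    (rpow_neg_one_half_sub_rpow_neg_one_half_add_nonneg (by positivity) (by positivity))

lemma volumeDeficitIntegrand_le {c A : ℝ} (hc : 0 ≤ c) (hA : 0 ≤ A) (t : ℝ) :
    volumeDeficitIntegrand c A t ≤ π * c * Real.exp (-t / 2) := by
  have hscale :
      (4 * Real.exp t * A) ^ ((3:ℝ)/2) = 8 * (Real.exp (3 * t / 2) * A ^ ((3:ℝ)/2)) := by
    have h4 : (4:ℝ) ^ ((3:ℝ)/2) = 8 := by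
      rw [rpow_three_halves_eq_mul_sqrt (by norm_num), show (4:ℝ) = 2 ^ 2 by norm_num,
        Real.sqrt_sq (by norm_num)]
      norm_num
    rw [Real.mul_rpow (by positivity) hA, Real.mul_rpow (by norm_num) (by positivity), h4,
      ← Real.exp_mul, mul_div_assoc', mul_comm t 3, mul_assoc]
  have key := rpow_three_halves_mul_rpow_neg_one_half_sub_le (y := 4 * Real.exp t * A)
    (x := 4 * Real.exp t * A + 16 * π) (d := 16 * π * (c * Real.exp (-t / 2)))
    (by positivity) (by linarith [Real.pi_pos]) (by positivity) (by positivity)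
  rw [hscale] at key
  unfold volumeDeficitIntegrand
  rw [mul_one_add, ← add_assoc]
  linarith

lemma integrableOn_exp_neg_half_Ioi :
    IntegrableOn (fun t : ℝ => Real.exp (-t / 2)) (Set.Ioi 0) := by
  simpa only [neg_div, neg_mul, one_div, inv_mul_eq_div] using
    exp_neg_integrableOn_Ioi 0 (by norm_num : (0:ℝ) < 1/2)

lemma integral_exp_neg_half_Ioi : ∫ t in Set.Ioi (0:ℝ), Real.exp (-t / 2) = 2 := by
  convert integral_exp_mul_Ioi (a := -1/2) (by norm_num) 0 using 1
  · simp only [neg_div, neg_mul, one_div, inv_mul_eq_div]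
  · norm_num

theorem volume_deficit_integral_bound (c : ℝ) (hc : 0 < c) :
    ∃ C > (0:ℝ), ∀ A : ℝ, 1 ≤ A →
      (∫ t in Set.Ioi (0:ℝ),
          Real.exp (3 * t / 2) * A ^ ((3:ℝ)/2) *
            ((4 * Real.exp t * A + 16 * π) ^ (-(1:ℝ)/2)
              - (4 * Real.exp t * A + 16 * π * (1 + c * Real.exp (-t / 2))) ^ (-(1:ℝ)/2)))
        ≤ C := by
  refine ⟨2 * π * c, by positivity, fun A hA => ?_⟩
  have hA0 : 0 ≤ A := by linarith
  calc ∫ t in Set.Ioi (0:ℝ), volumeDeficitIntegrand c A t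
      ≤ ∫ t in Set.Ioi (0:ℝ), π * c * Real.exp (-t / 2) :=
        integral_mono_of_nonneg (.of_forall (volumeDeficitIntegrand_nonneg hc.le hA0))
          (integrableOn_exp_neg_half_Ioi.const_mul _)
          (.of_forall (volumeDeficitIntegrand_le hc.le hA0))
    _ = 2 * π * c := by rw [integral_const_mul, integral_exp_neg_half_Ioi]; ring
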